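/- arXiv:1702.01314 — 2 statements merged into one kernel-verified Lean document; each statement's English description precedes it below -/
import Mathlib

section
/- Let C ⊆ F_q^n be a linear code of dimension k and minimum Hamming distance d, and let I ⊆ [n] be a set of coordinates. Define Cl(I) to be the set of coordinates i ∈ [n] such that for all codewords c, c' ∈ C, if c and c' agree on I then c_i = c'_i. If |Cl(I)| ≤ n - d, then the code obtained by restricting {c ∈ C : c_I = 0} to the coordinates [n] \ Cl(I) is a linear code of length n - |Cl(I)|, dimension at least k - |I|, and minimum distance at least d. -/
open scoped Classical

/-- Shortening: if |Cl(I)| ≤ n − d, the restriction of {c ∈ C : c_I = 0} to the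
coordinates outside Cl(I) is a linear code of length n − |Cl(I)|, dimension at
least k − |I|, and minimum distance at least d. -/
theorem stmt2 (F : Type*) [Field F] [Fintype F] [DecidableEq F]
    (n k d : ℕ) (C : Submodule F (Fin n → F))
    (hk : Module.finrank F C = k)
    (hd : ∀ c ∈ C, c ≠ 0 → d ≤ hammingNorm c)
    (I Cl : Set (Fin n))
    (hCl : Cl = {i | ∀ c ∈ C, ∀ c' ∈ C, (∀ j ∈ I, c j = c' j) → c i = c' i})
    (hcard : Cl.ncard ≤ n - d) :
    ∀ S : Submodule F (Fin n → F),
      S = C ⊓ ⨅ i ∈ I, LinearMap.ker (LinearMap.proj (R := F) (φ := fun _ : Fin n => F) i) →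
    ∀ D : Submodule F ({i : Fin n // i ∉ Cl} → F),
      D = S.map (LinearMap.funLeft F F Subtype.val) →
      Nat.card {i : Fin n // i ∉ Cl} = n - Cl.ncard ∧
      k - I.ncard ≤ Module.finrank F D ∧
      ∀ y ∈ D, y ≠ 0 → d ≤ hammingNorm y := by
  intro S hS D hD
  -- membership characterization of S
  have hSmem : ∀ x, x ∈ S ↔ x ∈ C ∧ ∀ j ∈ I, x j = 0 := by
    intro x
    rw [hS]
    simp [Submodule.mem_inf, Submodule.mem_iInf, LinearMap.mem_ker]
  -- elements of S vanish on Cl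
  have hzero : ∀ x ∈ S, ∀ i ∈ Cl, x i = 0 := by
    intro x hx i hi
    rw [hCl] at hi
    have hxC := ((hSmem x).mp hx).1
    have hxI := ((hSmem x).mp hx).2
    have := hi x hxC 0 C.zero_mem (fun j hj => by simp [hxI j hj])
    simpa using this
  -- the restriction map is injective on S
  have hinj : ∀ x ∈ S, (∀ i : {i : Fin n // i ∉ Cl}, x i.val = 0) → x = 0 := by
    intro x hx h
    funext i
    by_cases hi : i ∈ Cl
    · exact hzero x hx i hi
    · exact h ⟨i, hi⟩
  refine ⟨?_, ?_, ?_⟩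
  · -- cardinality
    have h1 : Nat.card {i : Fin n // i ∉ Cl} = (Clᶜ).ncard := by
      rw [← Nat.card_coe_set_eq]
      rfl
    have h2 : Cl.ncard + (Clᶜ).ncard = n := by
      rw [Set.ncard_add_ncard_compl]
      simp
    omega
  · -- dimension
    haveI : FiniteDimensional F (Fin n → F) := by infer_instance
    haveI : Fintype I := (Set.toFinite I).fintype
    -- map from C to I → F
    set f : C →ₗ[F] (I → F) := (LinearMap.funLeft F F Subtype.val).comp C.subtype with hf
    have hker : (LinearMap.ker f).map C.subtype = S := by
      ext x
      simp only [Submodule.mem_map, LinearMap.mem_ker, hSmem]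
      constructor
      · rintro ⟨⟨y, hy⟩, h0, rfl⟩
        refine ⟨hy, fun j hj => ?_⟩
        exact congrFun h0 ⟨j, hj⟩
      · rintro ⟨hxC, hxI⟩
        exact ⟨⟨x, hxC⟩, by funext j; exact hxI j.val j.2, rfl⟩
    have hrnk : Module.finrank F (LinearMap.range f) + Module.finrank F (LinearMap.ker f)
        = Module.finrank F C := LinearMap.finrank_range_add_finrank_ker f
    have hrange : Module.finrank F (LinearMap.range f) ≤ I.ncard := by
      have := Submodule.finrank_le (LinearMap.range f)
      have hcardI : Module.finrank F (I → F) = I.ncard := by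
        rw [Module.finrank_fintype_fun_eq_card, ← Nat.card_coe_set_eq, Nat.card_eq_fintype_card]
      omega
    have hSrank : k - I.ncard ≤ Module.finrank F S := by
      have := Submodule.finrank_map_subtype_eq C (LinearMap.ker f)
      rw [hker] at this
      omega
    -- D is image of S under injective-on-S map, so finrank D = finrank S
    set g : (Fin n → F) →ₗ[F] ({i : Fin n // i ∉ Cl} → F) := LinearMap.funLeft F F Subtype.val
    set h : S →ₗ[F] ({i : Fin n // i ∉ Cl} → F) := g.comp S.subtype with hh
    have hrangeh : LinearMap.range h = D := by
      rw [hD, hh, LinearMap.range_comp, Submodule.range_subtype]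
    have hkerh : LinearMap.ker h = ⊥ := by
      rw [LinearMap.ker_eq_bot']
      rintro ⟨x, hx⟩ hx0
      have : ∀ i : {i : Fin n // i ∉ Cl}, x i.val = 0 := fun i => congrFun hx0 i
      exact Subtype.ext (hinj x hx this)
    have := LinearMap.finrank_range_add_finrank_ker h
    rw [hrangeh, hkerh] at this
    rw [finrank_bot] at this
    omega
  · -- distance
    intro y hy hy0
    rw [hD] at hy
    obtain ⟨x, hxS, rfl⟩ := hy
    have hx0 : x ≠ 0 := by
      intro h; apply hy0; rw [h, map_zero]
    have hdx : d ≤ hammingNorm x := hd x ((hSmem x).mp hxS).1 hx0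
    have : hammingNorm x ≤ hammingNorm (LinearMap.funLeft F F (Subtype.val : {i : Fin n // i ∉ Cl} → Fin n) x) := by
      unfold hammingNorm
      apply Finset.card_le_card_of_surjOn (Subtype.val : {i : Fin n // i ∉ Cl} → Fin n)
      intro i hi
      simp only [Finset.coe_filter, Finset.mem_univ, true_and, Set.mem_setOf_eq,
        Set.mem_image] at hi ⊢
      have hic : i ∉ Cl := fun hic => hi (hzero x hxS i hic)
      exact ⟨⟨i, hic⟩, hi, rfl⟩
    omega
end

section
/- Let C ⊆ F_q^n be a linear code of dimension k with minimum distance d. For any I ⊆ [n] with |I| < k, the shortened code {c restricted to [n]\Cl(I) : c ∈ C, c_I = 0} has dimension at least k - |I| (in particular it is nonzero) and minimum distance at least d; consequently d ≤ d*_q(n - |Cl(I)|, k - |I|), where d*_q(N, K) denotes the maximum minimum distance of any linear code over F_q of length N and dimension at least K. -/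
open scoped Classical

/-- d*_q(N, K): the largest d such that some linear code over F_q of length N and
dimension at least K has all nonzero codewords of Hamming weight at least d. -/
noncomputable def dstar (F : Type*) [Field F] [Fintype F] [DecidableEq F] (N K : ℕ) : ℕ :=
  sSup {d | ∃ D : Submodule F (Fin N → F),
    K ≤ Module.finrank F D ∧ ∀ c ∈ D, c ≠ 0 → d ≤ hammingNorm c}

/-!
A codeword of `C` that vanishes on `I` agrees on `I` with the zero codeword, so it vanishes on
all of `Cl(I)`. Hence deleting the coordinates in `Cl(I)` neither changes the weight of such a
codeword nor kills it: the shortened code is an isometric, injective image of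
`C ∩ {c | c_I = 0}`, whose dimension is at least `k - |I|` by the dimension formula. For
`|I| < k` this is a code of length `n - |Cl(I)|` and positive dimension with minimum distance at
least `d`, so `d ≤ d*_q(n - |Cl(I)|, k - |I|)`.
-/

open Module LinearMap

section Hamming

variable {F ι κ : Type*} [Zero F] [DecidableEq F] [Fintype ι] [Fintype κ]

theorem hammingNorm_comp_equiv (e : κ ≃ ι) (v : ι → F) : hammingNorm (v ∘ e) = hammingNorm v :=
  Finset.card_equiv e (by simp)

theorem hammingNorm_restrict_compl {s : Set ι} {v : ι → F} (hv : ∀ i ∈ s, v i = 0) :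
    hammingNorm (fun j : {i // i ∉ s} => v j) = hammingNorm v := by
  refine Finset.card_nbij Subtype.val (fun j hj => by simpa using hj)
    Subtype.val_injective.injOn fun i hi => ?_
  have hvi : v i ≠ 0 := by simpa using hi
  exact ⟨⟨i, fun his => hvi (hv i his)⟩, by simpa using hvi, rfl⟩

end Hamming

section Shortening

variable {F ι : Type*} [Field F]

/-- The closure `Cl(I)` of `I` with respect to the code `C`. -/
def codeClosure (C : Submodule F (ι → F)) (I : Set ι) : Set ι :=
  {i | ∀ c ∈ C, ∀ c' ∈ C, (∀ j ∈ I, c j = c' j) → c i = c' i}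

theorem apply_eq_zero_of_mem_codeClosure {C : Submodule F (ι → F)} {I : Set ι} {c : ι → F}
    (hc : c ∈ C) (hcI : ∀ j ∈ I, c j = 0) {i : ι} (hi : i ∈ codeClosure C I) : c i = 0 :=
  hi c hc 0 C.zero_mem hcI

theorem mem_inf_iInf_ker_proj {C : Submodule F (ι → F)} {I : Set ι} {c : ι → F} :
    c ∈ C ⊓ ⨅ i ∈ I, ker (proj (φ := fun _ : ι => F) i) ↔ c ∈ C ∧ ∀ i ∈ I, c i = 0 := by
  simp only [Submodule.mem_inf, Submodule.mem_iInf, mem_ker, proj_apply]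

theorem finrank_iInf_ker_proj [Fintype ι] (I : Set ι) :
    finrank F ↥(⨅ i ∈ I, ker (proj (R := F) (φ := fun _ : ι => F) i)) =
      Fintype.card ι - I.ncard := by
  rw [(iInfKerProjEquiv F (fun _ : ι => F) disjoint_compl_left
      (by simp)).finrank_eq, finrank_pi, ← Nat.card_eq_fintype_card,
    Nat.card_coe_set_eq, Set.ncard_compl, Nat.card_eq_fintype_card]

theorem finrank_sub_ncard_le_finrank_inf_iInf_ker_proj [Fintype ι] (C : Submodule F (ι → F))
    (I : Set ι) :
    finrank F C - I.ncard ≤ finrank F ↥(C ⊓ ⨅ i ∈ I, ker (proj (φ := fun _ : ι => F) i)) := by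
  set K := ⨅ i ∈ I, ker (proj (R := F) (φ := fun _ : ι => F) i)
  have hsum := Submodule.finrank_sup_add_finrank_inf_eq C K
  have hsup : finrank F ↥(C ⊔ K) ≤ Fintype.card ι :=
    (Submodule.finrank_le _).trans_eq (finrank_fintype_fun_eq_card F)
  have hK : finrank F K = Fintype.card ι - I.ncard := finrank_iInf_ker_proj I
  have hI : I.ncard ≤ Fintype.card ι := by
    rw [← Nat.card_eq_fintype_card]; exact Set.ncard_le_card I
  omega

theorem injective_domRestrict_funLeft_val {S : Submodule F (ι → F)} {s : Set ι}
    (hS : ∀ c ∈ S, ∀ i ∈ s, c i = 0) :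
    Function.Injective ((funLeft F F (Subtype.val : {i // i ∉ s} → ι)).domRestrict S) := by
  refine (injective_iff_map_eq_zero _).2 fun c hc => Subtype.ext <| funext fun i => ?_
  by_cases his : i ∈ s
  · exact hS c c.2 i his
  · exact congrFun hc ⟨i, his⟩

theorem finrank_map_funLeft_val_of_forall_vanish {S : Submodule F (ι → F)} {s : Set ι}
    (hS : ∀ c ∈ S, ∀ i ∈ s, c i = 0) :
    finrank F (S.map (funLeft F F (Subtype.val : {i // i ∉ s} → ι))) = finrank F S := by
  rw [← range_domRestrict]
  exact finrank_range_of_inj (injective_domRestrict_funLeft_val hS)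

theorem le_hammingNorm_of_mem_map_funLeft_val [DecidableEq F] [Fintype ι]
    {S : Submodule F (ι → F)} {s : Set ι} (hS : ∀ c ∈ S, ∀ i ∈ s, c i = 0) {d : ℕ}
    (hd : ∀ c ∈ S, c ≠ 0 → d ≤ hammingNorm c) :
    ∀ y ∈ S.map (funLeft F F (Subtype.val : {i // i ∉ s} → ι)), y ≠ 0 → d ≤ hammingNorm y := by
  rintro _ ⟨c, hc, rfl⟩ hy
  have hc0 : c ≠ 0 := by rintro rfl; exact hy (map_zero _)
  exact (hd c hc hc0).trans_eq (hammingNorm_restrict_compl (hS c hc)).symm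

end Shortening

section Dstar

variable {F : Type*} [Field F] [DecidableEq F]

/-- For `K = 0` the zero code qualifies for every `d`, so this set is all of `ℕ` and
`dstar F N 0` is the junk value `sSup ℕ = 0`. -/
theorem bddAbove_dstar_set {N K : ℕ} (hK : 0 < K) :
    BddAbove {d | ∃ D : Submodule F (Fin N → F),
      K ≤ finrank F D ∧ ∀ c ∈ D, c ≠ 0 → d ≤ hammingNorm c} := by
  refine ⟨N, ?_⟩
  rintro d ⟨D, hKD, hw⟩
  have hD : D ≠ ⊥ := by rintro rfl; simp at hKD; omega
  obtain ⟨c, hc, hc0⟩ := Submodule.exists_mem_ne_zero_of_ne_bot hD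
  exact (hw c hc hc0).trans (hammingNorm_le_card_fintype.trans_eq (Fintype.card_fin N))

theorem le_dstar [Fintype F] {ι : Type*} [Fintype ι] {K d : ℕ} (hK : 0 < K)
    (D : Submodule F (ι → F)) (hKD : K ≤ finrank F D) (hw : ∀ c ∈ D, c ≠ 0 → d ≤ hammingNorm c) :
    d ≤ dstar F (Fintype.card ι) K := by
  let e : Fin (Fintype.card ι) ≃ ι := (Fintype.equivFin ι).symm
  let E := LinearEquiv.funCongrLeft F F e
  refine le_csSup (bddAbove_dstar_set hK) ⟨D.map E.toLinearMap, ?_, ?_⟩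
  · rwa [LinearEquiv.finrank_map_eq]
  · rintro _ ⟨y, hy, rfl⟩ hy0
    have hy0' : y ≠ 0 := by rintro rfl; exact hy0 (map_zero _)
    exact (hw y hy hy0').trans_eq (hammingNorm_comp_equiv e y).symm

end Dstar

/-- Distance form of the shortening bound: for |I| < k the shortened code has
dimension at least k − |I| and minimum distance at least d, hence
d ≤ d*_q(n − |Cl(I)|, k − |I|). -/
theorem stmt3 (F : Type*) [Field F] [Fintype F] [DecidableEq F]
    (n k d : ℕ) (C : Submodule F (Fin n → F))
    (hk : Module.finrank F C = k)
    (hd : ∀ c ∈ C, c ≠ 0 → d ≤ hammingNorm c)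
    (I Cl : Set (Fin n))
    (hCl : Cl = {i | ∀ c ∈ C, ∀ c' ∈ C, (∀ j ∈ I, c j = c' j) → c i = c' i})
    (hI : I.ncard < k) :
    ∀ S : Submodule F (Fin n → F),
      S = C ⊓ ⨅ i ∈ I, LinearMap.ker (LinearMap.proj (R := F) (φ := fun _ : Fin n => F) i) →
    ∀ D : Submodule F ({i : Fin n // i ∉ Cl} → F),
      D = S.map (LinearMap.funLeft F F Subtype.val) →
      k - I.ncard ≤ Module.finrank F D ∧
      (∀ y ∈ D, y ≠ 0 → d ≤ hammingNorm y) ∧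
      d ≤ dstar F (n - Cl.ncard) (k - I.ncard) := by
  rintro S rfl D rfl
  have hvanish : ∀ c ∈ C ⊓ ⨅ i ∈ I, ker (proj (R := F) (φ := fun _ : Fin n => F) i),
      ∀ i ∈ Cl, c i = 0 := fun c hc i hi =>
    apply_eq_zero_of_mem_codeClosure (mem_inf_iInf_ker_proj.1 hc).1
      (mem_inf_iInf_ker_proj.1 hc).2 (by rwa [hCl] at hi)
  have hdim := finrank_sub_ncard_le_finrank_inf_iInf_ker_proj C I
  rw [hk, ← finrank_map_funLeft_val_of_forall_vanish hvanish] at hdim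
  have hdist := le_hammingNorm_of_mem_map_funLeft_val hvanish fun c hc => hd c hc.1
  have hlength : Fintype.card {i // i ∉ Cl} = n - Cl.ncard := by
    rw [Fintype.card_subtype_compl, Fintype.card_fin, ← Nat.card_coe_set_eq,
      Nat.card_eq_fintype_card]
  exact ⟨hdim, hdist, hlength ▸ le_dstar (by omega) _ hdim hdist⟩
end
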